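/- Let −∞ < t₁ < t₂ < ∞ and let Q : [t₁,t₂] → M₃(ℝ) be continuous with Q(t) ∈ 𝒬 for every t. Suppose Q̄ = P(m̄) for some m̄ ∈ 𝕊², that 0 < ε < √2, and that ‖Q(t) − Q̄‖ ≤ ε|s| for all t ∈ [t₁,t₂] (Frobenius norm). Then there exists a continuous map n⁺ : [t₁,t₂] → 𝕊² with Q(t) = P(n⁺(t)) and |n⁺(t) − m̄| ≤ ε for all t ∈ [t₁,t₂], while the opposite lifting n⁻ = −n⁺ satisfies Q(t) = P(n⁻(t)) and |n⁻(t) + m̄| ≤ ε for all t ∈ [t₁,t₂]. -/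

import Mathlib

/-!
Since `‖P(n) - P(m)‖² = 2s²(1 - ⟪n, m⟫²)` for unit vectors, the hypothesis gives
`⟪n, m̄⟫² ≥ 1 - ε²/2 > 0` for every unit `n` with `Q(t) = P(n)`. The vector
`(s⁻¹ Q(t) + I/3) m̄ = ⟪n, m̄⟫ n` therefore never vanishes and depends continuously
on `t`; its normalization `n⁺(t) = sign ⟪n, m̄⟫ n` is a lift of `Q(t)` with
`⟪n⁺, m̄⟫ = |⟪n, m̄⟫| ≥ ⟪n, m̄⟫² ≥ 1 - ε²/2`, which is `‖n⁺ - m̄‖ ≤ ε`.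
-/

/-- `P(n) = s (n⊗n − (1/3) Id)`. -/
noncomputable def Pmat (s : ℝ) (n : Fin 3 → ℝ) : Matrix (Fin 3) (Fin 3) ℝ :=
  s • (Matrix.vecMulVec n n - (1 / 3 : ℝ) • (1 : Matrix (Fin 3) (Fin 3) ℝ))

/-- The Frobenius norm of a 3×3 real matrix. -/
noncomputable def frob (M : Matrix (Fin 3) (Fin 3) ℝ) : ℝ :=
  Real.sqrt (∑ i, ∑ j, (M i j) ^ 2)

open Matrix WithLp
open scoped RealInnerProductSpace

local notation "ℝ³" => EuclideanSpace ℝ (Fin 3)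

lemma sum_sq_vecMulVec_sub_vecMulVec {ι : Type*} [Fintype ι] (x y : ι → ℝ) :
    ∑ i, ∑ j, (vecMulVec x x - vecMulVec y y) i j ^ 2
      = (x ⬝ᵥ x) ^ 2 - 2 * (x ⬝ᵥ y) ^ 2 + (y ⬝ᵥ y) ^ 2 := by
  have expand (i j : ι) : (vecMulVec x x - vecMulVec y y) i j ^ 2
      = x i * x i * (x j * x j) - 2 * (x i * y i * (x j * y j)) + y i * y i * (y j * y j) := by
    rw [Matrix.sub_apply, vecMulVec_apply, vecMulVec_apply]
    ring
  simp only [expand, Finset.sum_add_distrib, Finset.sum_sub_distrib, ← Finset.mul_sum,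
    ← Finset.sum_mul, dotProduct]
  ring

lemma EuclideanSpace.real_inner_eq_dotProduct {ι : Type*} [Fintype ι]
    (x y : EuclideanSpace ℝ ι) :
    ⟪x, y⟫ = x.ofLp ⬝ᵥ y.ofLp := by
  rw [EuclideanSpace.inner_eq_star_dotProduct, star_trivial, dotProduct_comm]

lemma norm_sub_le_of_le_inner {E : Type*} [NormedAddCommGroup E] [InnerProductSpace ℝ E]
    {x y : E} (hx : ‖x‖ = 1) (hy : ‖y‖ = 1) {ε : ℝ} (hε : 0 ≤ ε) (h : 1 - ε ^ 2 / 2 ≤ ⟪x, y⟫) :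
    ‖x - y‖ ≤ ε := by
  refine (pow_le_pow_iff_left₀ (norm_nonneg _) hε two_ne_zero).mp ?_
  rw [norm_sub_sq_real, hx, hy]
  linarith

lemma frob_nonneg (M : Matrix (Fin 3) (Fin 3) ℝ) : 0 ≤ frob M := Real.sqrt_nonneg _

lemma frob_sq (M : Matrix (Fin 3) (Fin 3) ℝ) : frob M ^ 2 = ∑ i, ∑ j, M i j ^ 2 :=
  Real.sq_sqrt (by positivity)

lemma frob_smul (c : ℝ) (M : Matrix (Fin 3) (Fin 3) ℝ) : frob (c • M) = |c| * frob M := by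
  rw [frob, frob, ← Real.sqrt_sq_eq_abs, ← Real.sqrt_mul (sq_nonneg c)]
  simp only [Matrix.smul_apply, smul_eq_mul, mul_pow, Finset.mul_sum]

lemma Pmat_sub_Pmat (s : ℝ) (x y : Fin 3 → ℝ) :
    Pmat s x - Pmat s y = s • (vecMulVec x x - vecMulVec y y) := by
  rw [Pmat, Pmat, ← smul_sub, sub_sub_sub_cancel_right]

lemma Pmat_smul_of_sq_eq_one (s : ℝ) (x : Fin 3 → ℝ) {a : ℝ} (ha : a ^ 2 = 1) :
    Pmat s (a • x) = Pmat s x := by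
  rw [Pmat, smul_vecMulVec, vecMulVec_smul, smul_smul, ← sq, ha, one_smul, Pmat]

lemma Pmat_neg (s : ℝ) (x : Fin 3 → ℝ) : Pmat s (-x) = Pmat s x := by
  simpa using Pmat_smul_of_sq_eq_one s x (a := -1) (by norm_num)

lemma Pmat_mulVec (s : ℝ) (x y : Fin 3 → ℝ) :
    Pmat s x *ᵥ y = s • ((x ⬝ᵥ y) • x - (1 / 3 : ℝ) • y) := by
  rw [Pmat, smul_mulVec, sub_mulVec, vecMulVec_mulVec, smul_mulVec, one_mulVec, op_smul_eq_smul]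

section

variable {s : ℝ}

lemma frob_Pmat_sub_sq {n m : ℝ³} (hn : ‖n‖ = 1) (hm : ‖m‖ = 1) :
    frob (Pmat s n.ofLp - Pmat s m.ofLp) ^ 2 = 2 * s ^ 2 * (1 - ⟪n, m⟫ ^ 2) := by
  have unit {x : ℝ³} (hx : ‖x‖ = 1) : x.ofLp ⬝ᵥ x.ofLp = 1 := by
    rw [← EuclideanSpace.real_inner_eq_dotProduct, real_inner_self_eq_norm_sq, hx, one_pow]
  rw [Pmat_sub_Pmat, frob_smul, mul_pow, frob_sq, sq_abs, sum_sq_vecMulVec_sub_vecMulVec,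
    unit hn, unit hm, EuclideanSpace.real_inner_eq_dotProduct]
  ring

lemma one_sub_sq_div_two_le_inner_sq (hs : s ≠ 0) {n m : ℝ³} (hn : ‖n‖ = 1) (hm : ‖m‖ = 1)
    {ε : ℝ} (h : frob (Pmat s n.ofLp - Pmat s m.ofLp) ≤ ε * |s|) :
    1 - ε ^ 2 / 2 ≤ ⟪n, m⟫ ^ 2 := by
  have hsq := pow_le_pow_left₀ (frob_nonneg _) h 2
  rw [frob_Pmat_sub_sq hn hm, mul_pow, sq_abs] at hsq
  have hs2 : 0 < s ^ 2 := by positivity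
  nlinarith

noncomputable def poleVector (s : ℝ) (m : ℝ³) (M : Matrix (Fin 3) (Fin 3) ℝ) : ℝ³ :=
  toLp 2 ((s⁻¹ • M + (1 / 3 : ℝ) • 1) *ᵥ m.ofLp)

/-- Of the two unit vectors `±n` with `P(±n) = M`, normalizing `poleVector` selects the one on the
side of `m`; unlike an arbitrary choice of `n`, it depends continuously on `M`. -/
noncomputable def director (s : ℝ) (m : ℝ³) (M : Matrix (Fin 3) (Fin 3) ℝ) : ℝ³ :=
  ‖poleVector s m M‖⁻¹ • poleVector s m M

lemma poleVector_Pmat (hs : s ≠ 0) (n m : ℝ³) :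
    poleVector s m (Pmat s n.ofLp) = ⟪n, m⟫ • n := by
  rw [poleVector, add_mulVec, smul_mulVec, Pmat_mulVec, smul_smul, inv_mul_cancel₀ hs, one_smul,
    smul_mulVec, one_mulVec, sub_add_cancel, EuclideanSpace.real_inner_eq_dotProduct]
  rfl

lemma continuous_poleVector (s : ℝ) (m : ℝ³) : Continuous (poleVector s m) :=
  (PiLp.continuous_toLp 2 _).comp <|
    ((continuous_const_smul s⁻¹).add continuous_const).matrix_mulVec continuous_const

lemma continuousAt_director {m : ℝ³} {M : Matrix (Fin 3) (Fin 3) ℝ}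
    (h : poleVector s m M ≠ 0) : ContinuousAt (director s m) M :=
  have hw := (continuous_poleVector s m).continuousAt (x := M)
  (hw.norm.inv₀ (norm_ne_zero_iff.mpr h)).smul hw

lemma director_Pmat (hs : s ≠ 0) {n : ℝ³} (hn : ‖n‖ = 1) (m : ℝ³) :
    director s m (Pmat s n.ofLp) = (SignType.sign ⟪n, m⟫ : ℝ) • n := by
  rw [director, poleVector_Pmat hs, norm_smul, hn, mul_one, Real.norm_eq_abs, smul_smul]
  congr 1
  rcases eq_or_ne ⟪n, m⟫ 0 with h | h
  · simp [h]
  · rw [inv_mul_eq_iff_eq_mul₀ (abs_ne_zero.mpr h), abs_mul_sign]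

lemma norm_director_Pmat (hs : s ≠ 0) {n m : ℝ³} (hn : ‖n‖ = 1) (h : ⟪n, m⟫ ≠ 0) :
    ‖director s m (Pmat s n.ofLp)‖ = 1 := by
  rcases h.lt_or_gt with h | h <;> simp [director_Pmat hs hn, hn, h]

lemma Pmat_director_Pmat (hs : s ≠ 0) {n m : ℝ³} (hn : ‖n‖ = 1) (h : ⟪n, m⟫ ≠ 0) :
    Pmat s (director s m (Pmat s n.ofLp)).ofLp = Pmat s n.ofLp := by
  rw [director_Pmat hs hn, ofLp_smul]
  exact Pmat_smul_of_sq_eq_one _ _ (by rcases h.lt_or_gt with h | h <;> simp [h])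

lemma inner_director_Pmat (hs : s ≠ 0) {n : ℝ³} (hn : ‖n‖ = 1) (m : ℝ³) :
    ⟪director s m (Pmat s n.ofLp), m⟫ = |⟪n, m⟫| := by
  rw [director_Pmat hs hn, real_inner_smul_left, sign_mul_self]

lemma continuousAt_director_Pmat (hs : s ≠ 0) {n m : ℝ³} (hn : ‖n‖ = 1) (h : ⟪n, m⟫ ≠ 0) :
    ContinuousAt (director s m) (Pmat s n.ofLp) := by
  refine continuousAt_director ?_
  rw [poleVector_Pmat hs]
  exact smul_ne_zero h (norm_ne_zero_iff.mp (by simp [hn]))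

lemma norm_director_Pmat_sub_le (hs : s ≠ 0) {n m : ℝ³} (hn : ‖n‖ = 1) (hm : ‖m‖ = 1)
    {ε : ℝ} (hε : 0 ≤ ε) (h : 1 - ε ^ 2 / 2 ≤ ⟪n, m⟫ ^ 2) (hnm : ⟪n, m⟫ ≠ 0) :
    ‖director s m (Pmat s n.ofLp) - m‖ ≤ ε := by
  refine norm_sub_le_of_le_inner (norm_director_Pmat hs hn hnm) hm hε ?_
  have hle : |⟪n, m⟫| ≤ 1 := by simpa [hn, hm] using abs_real_inner_le_norm n m
  calc 1 - ε ^ 2 / 2 ≤ ⟪n, m⟫ ^ 2 := h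
    _ = |⟪n, m⟫| * |⟪n, m⟫| := by rw [← sq_abs, sq]
    _ ≤ |⟪n, m⟫| := mul_le_of_le_one_left (abs_nonneg _) hle
    _ = ⟪director s m (Pmat s n.ofLp), m⟫ := (inner_director_Pmat hs hn m).symm

end

theorem stmt4_general (s : ℝ) (hs : s ≠ 0)
    (t₁ t₂ : ℝ)
    (Q : Set.Icc t₁ t₂ → Matrix (Fin 3) (Fin 3) ℝ) (hQc : Continuous Q)
    (hQval : ∀ t, ∃ m : EuclideanSpace ℝ (Fin 3), ‖m‖ = 1 ∧ Q t = Pmat s (fun i => m i))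
    (mbar : EuclideanSpace ℝ (Fin 3)) (hmbar : ‖mbar‖ = 1)
    (Qbar : Matrix (Fin 3) (Fin 3) ℝ) (hQbar : Qbar = Pmat s (fun i => mbar i))
    (ε : ℝ) (hε0 : 0 < ε) (hε2 : ε < Real.sqrt 2)
    (hclose : ∀ t, frob (Q t - Qbar) ≤ ε * |s|) :
    ∃ np : Set.Icc t₁ t₂ → EuclideanSpace ℝ (Fin 3),
      Continuous np ∧
      (∀ t, ‖np t‖ = 1 ∧ Q t = Pmat s (fun i => np t i) ∧ ‖np t - mbar‖ ≤ ε) ∧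
      (∀ t, Q t = Pmat s (fun i => (-(np t)) i) ∧ ‖-(np t) + mbar‖ ≤ ε) := by
  choose n hn hQn using hQval
  have hcos (t) : 1 - ε ^ 2 / 2 ≤ ⟪n t, mbar⟫ ^ 2 :=
    one_sub_sq_div_two_le_inner_sq hs (hn t) hmbar (hQn t ▸ hQbar ▸ hclose t)
  have hcos_ne (t) : ⟪n t, mbar⟫ ≠ 0 := by
    have hε2' : ε ^ 2 < 2 := (Real.lt_sqrt hε0.le).mp hε2
    intro h
    linarith [h ▸ hcos t]
  refine ⟨fun t => director s mbar (Q t), ?_, fun t => ?_, fun t => ?_⟩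
  · refine continuous_iff_continuousAt.mpr fun t =>
      ContinuousAt.comp (g := director s mbar) ?_ hQc.continuousAt
    rw [hQn t]
    exact continuousAt_director_Pmat hs (hn t) (hcos_ne t)
  · beta_reduce
    rw [hQn t]
    exact ⟨norm_director_Pmat hs (hn t) (hcos_ne t),
      (Pmat_director_Pmat hs (hn t) (hcos_ne t)).symm,
      norm_director_Pmat_sub_le hs (hn t) hmbar hε0.le (hcos t) (hcos_ne t)⟩
  · beta_reduce
    rw [ofLp_neg, Pmat_neg, neg_add_eq_sub, norm_sub_rev, hQn t]
    exact ⟨(Pmat_director_Pmat hs (hn t) (hcos_ne t)).symm,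
      norm_director_Pmat_sub_le hs (hn t) hmbar hε0.le (hcos t) (hcos_ne t)⟩

/-- if `Q` stays within Frobenius distance `ε|s|` (with `0 < ε < √2`) of
`Q̄ = P(m̄)`, then one continuous lifting `n⁺` of `Q` satisfies `|n⁺(t) − m̄| ≤ ε` and the
opposite lifting `n⁻ = −n⁺` satisfies `|n⁻(t) + m̄| ≤ ε` for all `t`. -/
theorem stmt4 (s : ℝ) (hs : s ≠ 0) (hs' : s ∈ Set.Icc (-(1 / 2) : ℝ) 1)
    (t₁ t₂ : ℝ) (ht : t₁ < t₂)
    (Q : Set.Icc t₁ t₂ → Matrix (Fin 3) (Fin 3) ℝ) (hQc : Continuous Q)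
    (hQval : ∀ t, ∃ m : EuclideanSpace ℝ (Fin 3), ‖m‖ = 1 ∧ Q t = Pmat s (fun i => m i))
    (mbar : EuclideanSpace ℝ (Fin 3)) (hmbar : ‖mbar‖ = 1)
    (Qbar : Matrix (Fin 3) (Fin 3) ℝ) (hQbar : Qbar = Pmat s (fun i => mbar i))
    (ε : ℝ) (hε0 : 0 < ε) (hε2 : ε < Real.sqrt 2)
    (hclose : ∀ t, frob (Q t - Qbar) ≤ ε * |s|) :
    ∃ np : Set.Icc t₁ t₂ → EuclideanSpace ℝ (Fin 3),
      Continuous np ∧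
      (∀ t, ‖np t‖ = 1 ∧ Q t = Pmat s (fun i => np t i) ∧ ‖np t - mbar‖ ≤ ε) ∧
      (∀ t, Q t = Pmat s (fun i => (-(np t)) i) ∧ ‖-(np t) + mbar‖ ≤ ε) :=
  stmt4_general s hs t₁ t₂ Q hQc hQval mbar hmbar Qbar hQbar ε hε0 hε2 hclose
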